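/- Let R be a ring with an element ω satisfying ω^k = 1. Define the binary operation a * b := ω·a + b on R, applied left-to-right. Then * is k-associative: for all x_0, x_1, ..., x_{k+1} in R, (x_0 * x_1 * ⋯ * x_k) * x_{k+1} = x_0 * (x_1 * ⋯ * x_{k+1}), where an unparenthesized product associates to the left. -/

import Mathlib

/-- The left-to-right product `x_a * x_{a+1} * ⋯ * x_{a+m}` under the operation
`a * b := ω·a + b`, i.e. `((⋯((x_a * x_{a+1}) * x_{a+2})⋯) * x_{a+m})`. -/
def leftProd {R : Type*} [Ring R] (ω : R) (x : ℕ → R) (a : ℕ) : ℕ → R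
  | 0 => x a
  | m + 1 => ω * leftProd ω x a m + x (a + m + 1)

/-! Unfolding the left-to-right product gives `x_a * ⋯ * x_{a+m} = Σ_i ω^(m-i) x_{a+i}`, so
peeling off the first factor costs a power of `ω`: `x_0 * ⋯ * x_{k+1} = ω^(k+1)·x_0 + x_1 * ⋯ * x_{k+1}`.
When `ω^k = 1` that power is `ω`, which is exactly `x_0 * (x_1 * ⋯ * x_{k+1})`. -/

theorem leftProd_succ_eq_pow_mul_add {R : Type*} [Ring R] (ω : R) (x : ℕ → R) (a m : ℕ) :
    leftProd ω x a (m + 1) = ω ^ (m + 1) * x a + leftProd ω (fun i => x (i + 1)) a m := by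
  induction m with
  | zero => simp [leftProd]
  | succ n ih =>
    rw [leftProd, ih, leftProd, mul_add, ← mul_assoc, ← pow_succ', add_assoc]
    rfl

/-- If `ω^k = 1` in a ring `R`, then `a * b := ω·a + b` is `k`-associative:
`(x_0 * x_1 * ⋯ * x_k) * x_{k+1} = x_0 * (x_1 * ⋯ * x_{k+1})`. -/
theorem k_associative {R : Type*} [Ring R] (k : ℕ) (ω : R) (hω : ω ^ k = 1)
    (x : ℕ → R) :
    ω * leftProd ω x 0 k + x (k + 1) =
      ω * x 0 + leftProd ω (fun i => x (i + 1)) 0 k := by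
  calc ω * leftProd ω x 0 k + x (k + 1) = leftProd ω x 0 (k + 1) := by rw [leftProd, zero_add]
    _ = ω ^ (k + 1) * x 0 + leftProd ω (fun i => x (i + 1)) 0 k :=
      leftProd_succ_eq_pow_mul_add ω x 0 k
    _ = ω * x 0 + leftProd ω (fun i => x (i + 1)) 0 k := by rw [pow_succ, hω, one_mul]
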